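/- Let M ≥ 1, θ : Fin M → ℝ, and let π, q : Fin M → ℝ be probability vectors. Define F_π(t) = ∑_a q a · ℓ(σ(t − θ a), ∑_b π b · σ(θ b − θ a)). Then F_π has a unique global minimizer θ′(π) ∈ ℝ, and t ∈ ℝ minimizes F_π if and only if ∑_a q a · σ(t − θ a) = ∑_b ∑_a π b · q a · σ(θ b − θ a) = R(π). -/

import Mathlib

/-- The logistic sigmoid `σ(t) = 1 / (1 + exp (-t))`. -/
noncomputable def sigmoid (t : ℝ) : ℝ := 1 / (1 + Real.exp (-t))

/-- Binary cross-entropy loss `ℓ(p, y) = -(y log p + (1 - y) log (1 - p))`. -/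
noncomputable def bce (p y : ℝ) : ℝ := -(y * Real.log p + (1 - y) * Real.log (1 - p))

/-- A probability vector on `Fin M`. -/
def IsProbVec {M : ℕ} (q : Fin M → ℝ) : Prop := (∀ a, 0 ≤ q a) ∧ ∑ a, q a = 1

/-!
Writing `y a = ∑ b, π b * σ(θ b - θ a)`, one has `d/dx ℓ(σ x, y) = σ x - y`, so
`F_π' (t) = ∑ a, q a * σ(t - θ a) - R(π)`. This derivative is increasing, hence `F_π` is convex
and its minimizers are exactly the zeros of `F_π'`. Such a zero exists and is unique because
`t ↦ ∑ a, q a * σ(t - θ a)` increases strictly and continuously from `0` to `1`, while `R(π)`,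
a `q`-average of the `π`-averages `y a` of values of `σ`, lies in `(0, 1)`.
-/

open Set Filter Topology

lemma sigmoid_eq_real_sigmoid : sigmoid = Real.sigmoid := by
  funext x
  rw [sigmoid, Real.sigmoid_def, one_div]

lemma hasDerivAt_bce_sigmoid (y x : ℝ) :
    HasDerivAt (fun x => bce (Real.sigmoid x) y) (Real.sigmoid x - y) x := by
  have hσ := Real.hasDerivAt_sigmoid x
  have hlog := hσ.log (Real.sigmoid_pos x).ne'
  have hlog_one_sub := (hσ.const_sub 1).log (sub_pos.2 (Real.sigmoid_lt_one x)).ne'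
  refine ((hlog.const_mul y).fun_add (hlog_one_sub.const_mul (1 - y))).fun_neg.congr_deriv ?_
  rw [mul_div_cancel_left₀ _ (Real.sigmoid_pos x).ne', neg_div,
    mul_div_cancel_right₀ _ (sub_pos.2 (Real.sigmoid_lt_one x)).ne']
  ring

lemma hasDerivAt_sum_mul_bce_sigmoid {ι : Type*} [Fintype ι] (q θ y : ι → ℝ) (t : ℝ) :
    HasDerivAt (fun t => ∑ a, q a * bce (Real.sigmoid (t - θ a)) (y a))
      (∑ a, q a * Real.sigmoid (t - θ a) - ∑ a, q a * y a) t := by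
  rw [← Finset.sum_sub_distrib]
  refine HasDerivAt.fun_sum fun a _ => ?_
  rw [← mul_sub]
  exact ((hasDerivAt_bce_sigmoid (y a) (t - θ a)).comp_sub_const t (θ a)).const_mul (q a)

theorem isMinOn_univ_iff_of_hasDerivAt_of_monotone {f f' : ℝ → ℝ}
    (hf : ∀ x, HasDerivAt f (f' x) x) (hf' : Monotone f') (x : ℝ) :
    IsMinOn f univ x ↔ f' x = 0 := by
  refine ⟨fun hmin => (hmin.isLocalMin univ_mem).hasDerivAt_eq_zero (hf x), fun hx => ?_⟩
  have hderiv : deriv f = f' := funext fun x => (hf x).deriv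
  have hconvex : ConvexOn ℝ univ f :=
    Monotone.convexOn_univ_of_deriv (fun x => (hf x).differentiableAt) (hderiv ▸ hf')
  refine hconvex.isMinOn_of_rightDeriv_eq_zero (by simp) ?_
  rw [(hf x).hasDerivWithinAt.derivWithin (uniqueDiffWithinAt_Ioi x), hx]

namespace IsProbVec

variable {M : ℕ} {q : Fin M → ℝ}

lemma exists_pos (hq : IsProbVec q) : ∃ a, 0 < q a := by
  by_contra! h
  have := Finset.sum_nonpos fun a (_ : a ∈ Finset.univ) => h a
  linarith [hq.2]

lemma sum_mul_mem_Ioo (hq : IsProbVec q) {x : Fin M → ℝ} (hx : ∀ a, x a ∈ Ioo 0 1) :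
    ∑ a, q a * x a ∈ Ioo 0 1 := by
  obtain ⟨a₀, ha₀⟩ := hq.exists_pos
  constructor
  · exact Finset.sum_pos' (fun a _ => mul_nonneg (hq.1 a) (hx a).1.le)
      ⟨a₀, Finset.mem_univ _, mul_pos ha₀ (hx a₀).1⟩
  · calc ∑ a, q a * x a < ∑ a, q a * 1 :=
          Finset.sum_lt_sum (fun a _ => mul_le_mul_of_nonneg_left (hx a).2.le (hq.1 a))
            ⟨a₀, Finset.mem_univ _, mul_lt_mul_of_pos_left (hx a₀).2 ha₀⟩
      _ = 1 := by simpa using hq.2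

lemma strictMono_sum_mul_sigmoid (hq : IsProbVec q) (θ : Fin M → ℝ) :
    StrictMono fun t => ∑ a, q a * Real.sigmoid (t - θ a) := by
  intro s t hst
  obtain ⟨a₀, ha₀⟩ := hq.exists_pos
  exact Finset.sum_lt_sum
    (fun a _ => mul_le_mul_of_nonneg_left (Real.sigmoid_le (by linarith)) (hq.1 a))
    ⟨a₀, Finset.mem_univ _, mul_lt_mul_of_pos_left (Real.sigmoid_lt (by linarith)) ha₀⟩

lemma Ioo_subset_range_sum_mul_sigmoid (hq : IsProbVec q) (θ : Fin M → ℝ) :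
    Ioo 0 1 ⊆ range fun t => ∑ a, q a * Real.sigmoid (t - θ a) := by
  intro c hc
  have hcont : Continuous fun t => ∑ a, q a * Real.sigmoid (t - θ a) := by fun_prop
  have htop : Tendsto (fun t => ∑ a, q a * Real.sigmoid (t - θ a)) atTop (𝓝 1) := by
    simpa [hq.2, sub_eq_add_neg] using tendsto_finsetSum Finset.univ fun a _ =>
      (Real.tendsto_sigmoid_atTop.comp
        (tendsto_atTop_add_const_right _ (-θ a) tendsto_id)).const_mul (q a)
  have hbot : Tendsto (fun t => ∑ a, q a * Real.sigmoid (t - θ a)) atBot (𝓝 0) := by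
    simpa [sub_eq_add_neg] using tendsto_finsetSum Finset.univ fun a _ =>
      (Real.tendsto_sigmoid_atBot.comp
        (tendsto_atBot_add_const_right _ (-θ a) tendsto_id)).const_mul (q a)
  exact mem_range_of_exists_le_of_exists_ge hcont
    ((hbot.eventually (eventually_le_nhds hc.1)).exists)
    ((htop.eventually (eventually_ge_nhds hc.2)).exists)

end IsProbVec

theorem router_bt_coefficient_characterization_general {M : ℕ} (θ : Fin M → ℝ)
    (π q : Fin M → ℝ) (hπ : IsProbVec π) (hq : IsProbVec q) :
    (∃! t₀ : ℝ, ∀ t : ℝ,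
        ∑ a, q a * bce (sigmoid (t₀ - θ a)) (∑ b, π b * sigmoid (θ b - θ a))
          ≤ ∑ a, q a * bce (sigmoid (t - θ a)) (∑ b, π b * sigmoid (θ b - θ a))) ∧
    (∀ t : ℝ,
        (∀ s : ℝ,
            ∑ a, q a * bce (sigmoid (t - θ a)) (∑ b, π b * sigmoid (θ b - θ a))
              ≤ ∑ a, q a * bce (sigmoid (s - θ a)) (∑ b, π b * sigmoid (θ b - θ a))) ↔
          ∑ a, q a * sigmoid (t - θ a) = ∑ b, ∑ a, π b * q a * sigmoid (θ b - θ a)) := by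
  rw [sigmoid_eq_real_sigmoid]
  set y : Fin M → ℝ := fun a => ∑ b, π b * Real.sigmoid (θ b - θ a)
  have hR : ∑ b, ∑ a, π b * q a * Real.sigmoid (θ b - θ a) = ∑ a, q a * y a := by
    rw [Finset.sum_comm]
    simp only [y, Finset.mul_sum, mul_left_comm (q _), mul_assoc]
  have hmin (t : ℝ) : (∀ s, ∑ a, q a * bce (Real.sigmoid (t - θ a)) (y a) ≤
        ∑ a, q a * bce (Real.sigmoid (s - θ a)) (y a)) ↔
      ∑ a, q a * Real.sigmoid (t - θ a) = ∑ a, q a * y a := by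
    have hmono : Monotone fun t => ∑ a, q a * Real.sigmoid (t - θ a) - ∑ a, q a * y a :=
      fun s t hst => sub_le_sub_right ((hq.strictMono_sum_mul_sigmoid θ).monotone hst) _
    exact isMinOn_univ_iff.symm.trans ((isMinOn_univ_iff_of_hasDerivAt_of_monotone
      (hasDerivAt_sum_mul_bce_sigmoid q θ y) hmono t).trans sub_eq_zero)
  obtain ⟨t₀, ht₀⟩ := hq.Ioo_subset_range_sum_mul_sigmoid θ
    (hq.sum_mul_mem_Ioo fun a => hπ.sum_mul_mem_Ioo fun b =>
      ⟨Real.sigmoid_pos _, Real.sigmoid_lt_one _⟩)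
  refine ⟨⟨t₀, (hmin t₀).2 ht₀, fun t ht => ?_⟩, fun t => hR ▸ hmin t⟩
  exact (hq.strictMono_sum_mul_sigmoid θ).injective (((hmin t).1 ht).trans ht₀.symm)

/-- For probability vectors `π, q`, the inner routing objective
`F_π(t) = ∑ a, q a * ℓ(σ(t - θ a), ∑ b, π b * σ(θ b - θ a))` has a unique global minimizer,
and `t` minimizes `F_π` iff `∑ a, q a * σ(t - θ a) = R(π)`, where
`R(π) = ∑ b, ∑ a, π b * q a * σ(θ b - θ a)`. -/
theorem router_bt_coefficient_characterization {M : ℕ} (hM : 1 ≤ M) (θ : Fin M → ℝ)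
    (π q : Fin M → ℝ) (hπ : IsProbVec π) (hq : IsProbVec q) :
    (∃! t₀ : ℝ, ∀ t : ℝ,
        ∑ a, q a * bce (sigmoid (t₀ - θ a)) (∑ b, π b * sigmoid (θ b - θ a))
          ≤ ∑ a, q a * bce (sigmoid (t - θ a)) (∑ b, π b * sigmoid (θ b - θ a))) ∧
    (∀ t : ℝ,
        (∀ s : ℝ,
            ∑ a, q a * bce (sigmoid (t - θ a)) (∑ b, π b * sigmoid (θ b - θ a))
              ≤ ∑ a, q a * bce (sigmoid (s - θ a)) (∑ b, π b * sigmoid (θ b - θ a))) ↔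
          ∑ a, q a * sigmoid (t - θ a) = ∑ b, ∑ a, π b * q a * sigmoid (θ b - θ a)) :=
  router_bt_coefficient_characterization_general θ π q hπ hq
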